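/- arXiv:2511.16311 — 3 statements merged into one kernel-verified Lean document; each statement's English description precedes it below -/
import Mathlib

section
/- Let M be a 2n-dimensional manifold with an exact LCS pair (λ, η), i.e. η closed and d_η λ := dλ − η∧λ nondegenerate, and let Z be the η-Liouville vector field defined by ι_Z(d_η λ) = λ. Then for every constant c ∈ ℝ, ι_Z((d_{cη}λ)^n) = n·(1 + (1−c)·η(Z))·λ ∧ (dλ)^{n−1}, where d_{cη}λ = dλ − c·η∧λ. -/
open ExteriorAlgebra

/-- Interior product (contraction) with a vector `Z`, acting on the exterior algebra of the
dual space (the algebra of pointwise differential forms). -/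
noncomputable def intProd {V : Type*} [AddCommGroup V] [Module ℝ V] (Z : V) :
    ExteriorAlgebra ℝ (Module.Dual ℝ V) →ₗ[ℝ] ExteriorAlgebra ℝ (Module.Dual ℝ V) :=
  CliffordAlgebra.contractLeft (Module.Dual.eval ℝ V Z)

set_option maxHeartbeats 1000000
set_option synthInstance.maxHeartbeats 400000

section Aux

variable {V : Type*} [AddCommGroup V] [Module ℝ V] (Z : V)

lemma intProd_ι (f : Module.Dual ℝ V) :
    intProd Z (ι ℝ f) = algebraMap ℝ (ExteriorAlgebra ℝ (Module.Dual ℝ V)) (f Z) :=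
  CliffordAlgebra.contractLeft_ι _ _ _

lemma intProd_ι_mul (f : Module.Dual ℝ V) (x : ExteriorAlgebra ℝ (Module.Dual ℝ V)) :
    intProd Z (ι ℝ f * x) = f Z • x - ι ℝ f * intProd Z x := by
  exact CliffordAlgebra.contractLeft_ι_mul _ f x

lemma even_commute {D : ExteriorAlgebra ℝ (Module.Dual ℝ V)}
    (hD : D ∈ (LinearMap.range
      (ι ℝ : Module.Dual ℝ V →ₗ[ℝ] ExteriorAlgebra ℝ (Module.Dual ℝ V))) ^ 2)
    (y : ExteriorAlgebra ℝ (Module.Dual ℝ V)) : D * y = y * D := by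
  rw [pow_two] at hD
  refine Submodule.mul_induction_on hD (fun a ha b hb => ?_)
    (fun x₁ x₂ h1 h2 => by rw [add_mul, mul_add, h1, h2])
  obtain ⟨a, rfl⟩ := ha
  obtain ⟨b, rfl⟩ := hb
  induction y using CliffordAlgebra.induction with
  | algebraMap r => exact (Algebra.commutes r _).symm
  | ι m =>
    have h1 : ι ℝ b * ι ℝ m = -(ι ℝ m * ι ℝ b) :=
      eq_neg_of_add_eq_zero_left (ExteriorAlgebra.ι_add_mul_swap b m)
    have h2 : ι ℝ a * ι ℝ m = -(ι ℝ m * ι ℝ a) :=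
      eq_neg_of_add_eq_zero_left (ExteriorAlgebra.ι_add_mul_swap a m)
    calc ι ℝ a * ι ℝ b * ι ℝ m = ι ℝ a * (ι ℝ b * ι ℝ m) := by rw [mul_assoc]
      _ = -(ι ℝ a * ι ℝ m * ι ℝ b) := by rw [h1]; noncomm_ring
      _ = ι ℝ m * (ι ℝ a * ι ℝ b) := by rw [h2]; noncomm_ring
  | mul x y hx hy =>
    calc ι ℝ a * ι ℝ b * (x * y) = (ι ℝ a * ι ℝ b * x) * y := (mul_assoc _ x y).symm
      _ = x * (ι ℝ a * ι ℝ b * y) := by rw [hx]; rw [mul_assoc]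
      _ = x * y * (ι ℝ a * ι ℝ b) := by rw [hy, ← mul_assoc]
  | add x y hx hy => rw [mul_add, add_mul, hx, hy]

lemma intProd_even_mul {D : ExteriorAlgebra ℝ (Module.Dual ℝ V)}
    (hD : D ∈ (LinearMap.range
      (ι ℝ : Module.Dual ℝ V →ₗ[ℝ] ExteriorAlgebra ℝ (Module.Dual ℝ V))) ^ 2)
    (y : ExteriorAlgebra ℝ (Module.Dual ℝ V)) :
    intProd Z (D * y) = intProd Z D * y + D * intProd Z y := by
  rw [pow_two] at hD
  refine Submodule.mul_induction_on hD (fun a ha b hb => ?_)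
    (fun x₁ x₂ h1 h2 => by simp only [add_mul, map_add, h1, h2]; abel)
  obtain ⟨a, rfl⟩ := ha
  obtain ⟨b, rfl⟩ := hb
  rw [mul_assoc, intProd_ι_mul, intProd_ι_mul, intProd_ι_mul, intProd_ι,
    Algebra.algebraMap_eq_smul_one]
  simp only [mul_sub, mul_smul_comm, smul_sub, smul_mul_assoc, mul_one, sub_mul, mul_assoc]
  abel

lemma intProd_even_pow {D : ExteriorAlgebra ℝ (Module.Dual ℝ V)}
    (hD : D ∈ (LinearMap.range
      (ι ℝ : Module.Dual ℝ V →ₗ[ℝ] ExteriorAlgebra ℝ (Module.Dual ℝ V))) ^ 2)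
    (k : ℕ) :
    intProd Z (D ^ (k + 1)) = (k + 1) • (intProd Z D * D ^ k) := by
  induction k with
  | zero => simp
  | succ k ih =>
    calc intProd Z (D ^ (k + 1 + 1)) = intProd Z (D * D ^ (k + 1)) := by rw [pow_succ']
      _ = intProd Z D * D ^ (k + 1) + D * intProd Z (D ^ (k + 1)) := intProd_even_mul Z hD _
      _ = intProd Z D * D ^ (k + 1) + (k + 1) • (D * (intProd Z D * D ^ k)) := by
          rw [ih, mul_smul_comm]
      _ = intProd Z D * D ^ (k + 1) + (k + 1) • (intProd Z D * D ^ (k + 1)) := by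
          rw [← mul_assoc, even_commute hD (intProd Z D), mul_assoc, ← pow_succ']
      _ = (k + 1 + 1) • (intProd Z D * D ^ (k + 1)) := by
          rw [add_comm]; exact (succ_nsmul _ _).symm

end Aux

/-- pointwise, in the exterior algebra of the dual of the tangent space.
Let `lam, η` be `1`-forms, `D` a `2`-form (representing `dλ`), and `Z` the
`η`-Liouville vector, i.e. `ι_Z(D − η∧λ) = λ`. Then for every `c ∈ ℝ` and `n ≥ 1`,
`ι_Z((D − c·η∧λ)^n) = n·(1 + (1−c)·η(Z)) · λ ∧ D^{n−1}`. -/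
theorem contraction_of_power_of_lcs_form {V : Type*} [AddCommGroup V] [Module ℝ V]
    (n : ℕ) (hn : 1 ≤ n) (lam η : Module.Dual ℝ V) (Z : V)
    (D : ExteriorAlgebra ℝ (Module.Dual ℝ V))
    (hD : D ∈ (LinearMap.range
      (ι ℝ : Module.Dual ℝ V →ₗ[ℝ] ExteriorAlgebra ℝ (Module.Dual ℝ V))) ^ 2)
    (hZ : intProd Z (D - ι ℝ η * ι ℝ lam) = ι ℝ lam) (c : ℝ) :
    intProd Z ((D - c • (ι ℝ η * ι ℝ lam)) ^ n)
      = ((n : ℝ) * (1 + (1 - c) * η Z)) • (ι ℝ lam * D ^ (n - 1)) := by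
  obtain ⟨m, rfl⟩ : ∃ m, n = m + 1 := ⟨n - 1, (Nat.succ_pred_eq_of_pos hn).symm⟩
  set ω := D - c • (ι ℝ η * ι ℝ lam) with hωdef
  have h_el : ι ℝ η * ι ℝ lam ∈ (LinearMap.range
      (ι ℝ : Module.Dual ℝ V →ₗ[ℝ] ExteriorAlgebra ℝ (Module.Dual ℝ V))) ^ 2 := by
    rw [pow_two]
    exact Submodule.mul_mem_mul (LinearMap.mem_range_self _ η) (LinearMap.mem_range_self _ lam)
  have hω : ω ∈ (LinearMap.range
      (ι ℝ : Module.Dual ℝ V →ₗ[ℝ] ExteriorAlgebra ℝ (Module.Dual ℝ V))) ^ 2 :=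
    sub_mem hD (Submodule.smul_mem _ c h_el)
  -- lam Z = 0
  have h_lZ : lam Z = 0 := by
    have h0 : intProd Z (ι ℝ lam) = 0 := by
      rw [← hZ]
      exact CliffordAlgebra.contractLeft_contractLeft _ _
    rw [intProd_ι] at h0
    exact (map_eq_zero_iff _ (ExteriorAlgebra.algebraMap_leftInverse _).injective).mp h0
  -- contraction of η∧λ
  have h_bel : intProd Z (ι ℝ η * ι ℝ lam) = η Z • ι ℝ lam := by
    rw [intProd_ι_mul, intProd_ι, h_lZ, map_zero, mul_zero, sub_zero]
  -- contraction of D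
  have hβD : intProd Z D = (1 + η Z) • ι ℝ lam := by
    have := hZ
    rw [map_sub, h_bel, sub_eq_iff_eq_add] at this
    rw [this, add_smul, one_smul, add_comm]
  -- contraction of ω
  have hβω : intProd Z ω = (1 + (1 - c) * η Z) • ι ℝ lam := by
    rw [hωdef, map_sub, map_smul, h_bel, hβD, smul_smul]
    module
  -- λ ∧ ω^m = λ ∧ D^m
  have h_lo1 : ι ℝ lam * ω = ι ℝ lam * D := by
    have h0 : ι ℝ lam * (ι ℝ η * ι ℝ lam) = 0 := by
      rw [← mul_assoc, eq_neg_of_add_eq_zero_left (ExteriorAlgebra.ι_add_mul_swap lam η),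
        neg_mul, mul_assoc, ExteriorAlgebra.ι_sq_zero, mul_zero, neg_zero]
    rw [hωdef, mul_sub, mul_smul_comm, h0, smul_zero, sub_zero]
  have h_lo : ∀ k : ℕ, ι ℝ lam * ω ^ k = ι ℝ lam * D ^ k := by
    intro k
    induction k with
    | zero => rw [pow_zero, pow_zero]
    | succ k ih =>
      calc ι ℝ lam * ω ^ (k + 1) = (ι ℝ lam * ω) * ω ^ k := by rw [pow_succ', ← mul_assoc]
        _ = D * (ι ℝ lam * ω ^ k) := by rw [h_lo1, ← even_commute hD (ι ℝ lam), mul_assoc]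
        _ = D * (ι ℝ lam * D ^ k) := by rw [ih]
        _ = ι ℝ lam * D ^ (k + 1) := by
            rw [← mul_assoc, even_commute hD (ι ℝ lam), mul_assoc, ← pow_succ']
  -- assemble
  rw [intProd_even_pow Z hω m, hβω, smul_mul_assoc, h_lo, Nat.add_sub_cancel,
    ← Nat.cast_smul_eq_nsmul ℝ, smul_smul]
end

section
/- Let (λ, η) be an exact LCS pair on a 2n-dimensional manifold M with η-Liouville vector field Z (ι_Z d_η λ = λ). Then the function η(Z) is nonvanishing if and only if the 2n-form η ∧ λ ∧ (dλ)^{n−1} is nonvanishing. -/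
open ExteriorAlgebra

section Aux

variable {W : Type*} [AddCommGroup W] [Module ℝ W]

local notation "p" => (LinearMap.range (ι ℝ : W →ₗ[ℝ] ExteriorAlgebra ℝ W))

/-- `ι x * ι y = -(ι y * ι x)`. -/
theorem aux_ι_anticomm (x y : W) : ι ℝ x * ι ℝ y = -(ι ℝ y * ι ℝ x) := by
  have h := ι_add_mul_swap (R := ℝ) x y
  rw [eq_neg_iff_add_eq_zero, h]

/-- Degree-2 elements are central. -/
theorem aux_central {x : ExteriorAlgebra ℝ W} (hx : x ∈ p ^ 2)
    (y : ExteriorAlgebra ℝ W) : x * y = y * x := by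
  rw [pow_two] at hx
  refine Submodule.mul_induction_on hx (fun a ha b hb => ?_) (fun u v hu hv => by
    rw [add_mul, hu, hv, mul_add])
  obtain ⟨a, rfl⟩ := ha
  obtain ⟨b, rfl⟩ := hb
  · induction y using CliffordAlgebra.induction with
    | algebraMap r => rw [Algebra.commutes]
    | ι m =>
      rw [mul_assoc, aux_ι_anticomm b m, mul_neg, ← mul_assoc, aux_ι_anticomm a m,
        neg_mul, neg_neg, mul_assoc]
    | mul u v hu hv => rw [← mul_assoc, hu, mul_assoc, hv, ← mul_assoc]
    | add u v hu hv => rw [mul_add, hu, hv, add_mul]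

/-- Leibniz rule for contraction against a degree-2 element. -/
theorem aux_contract_two (d : Module.Dual ℝ W) {x : ExteriorAlgebra ℝ W}
    (hx : x ∈ p ^ 2) (y : ExteriorAlgebra ℝ W) :
    CliffordAlgebra.contractLeft d (x * y) =
      CliffordAlgebra.contractLeft d x * y + x * CliffordAlgebra.contractLeft d y := by
  rw [pow_two] at hx
  refine Submodule.mul_induction_on hx (fun a ha b hb => ?_) (fun u v hu hv => by
    rw [add_mul, map_add, map_add, hu, hv, add_mul, add_mul, add_add_add_comm])
  obtain ⟨a, rfl⟩ := ha
  obtain ⟨b, rfl⟩ := hb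
  rw [mul_assoc, CliffordAlgebra.contractLeft_ι_mul, CliffordAlgebra.contractLeft_ι_mul,
    CliffordAlgebra.contractLeft_ι_mul, CliffordAlgebra.contractLeft_ι]
  have hab : ι ℝ a * algebraMap ℝ (ExteriorAlgebra ℝ W) (d b) = d b • ι ℝ a := by
    rw [← Algebra.commutes, ← Algebra.smul_def]
  rw [hab]
  simp only [mul_sub, sub_mul, smul_mul_assoc, mul_smul_comm, mul_assoc]
  abel

/-- Any element of exterior degree `k > finrank` vanishes. -/
theorem aux_top_kill [FiniteDimensional ℝ W] {k : ℕ}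
    (hk : Module.finrank ℝ W < k) {x : ExteriorAlgebra ℝ W} (hx : x ∈ p ^ k) :
    x = 0 := by
  replace hx : x ∈ Submodule.span ℝ (Set.range (ιMulti ℝ k (M := W))) := by
    rw [ιMulti_span_fixedDegree]; exact hx
  induction hx using Submodule.span_induction with
  | mem u hu =>
    obtain ⟨v, rfl⟩ := hu
    refine AlternatingMap.map_linearDependent _ v fun hli => ?_
    have := hli.fintype_card_le_finrank
    simp only [Fintype.card_fin] at this
    omega
  | zero => rfl
  | add u v _ _ hu hv => rw [hu, hv, add_zero]
  | smul r u _ hu => rw [hu, smul_zero]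

/-- A top-degree element contracted to zero by a nonzero functional is zero. -/
theorem aux_top_inj [FiniteDimensional ℝ W] (d : Module.Dual ℝ W)
    {w : W} (hw : d w ≠ 0) {x : ExteriorAlgebra ℝ W}
    (hx : x ∈ p ^ (Module.finrank ℝ W))
    (hc : CliffordAlgebra.contractLeft d x = 0) : x = 0 := by
  have h1 : ι ℝ w * x = 0 := by
    apply aux_top_kill (k := Module.finrank ℝ W + 1) (Nat.lt_succ_self _)
    rw [pow_succ']
    exact Submodule.mul_mem_mul (LinearMap.mem_range_self _ _) hx
  have h2 := CliffordAlgebra.contractLeft_ι_mul d w x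
  rw [h1, map_zero, hc, mul_zero, sub_zero] at h2
  rcases smul_eq_zero.mp h2.symm with h | h
  · exact absurd h hw
  · exact h

end Aux

set_option maxHeartbeats 1000000 in
set_option synthInstance.maxHeartbeats 100000 in
/-- pointwise, on a `2n`-dimensional space. Let `(λ, η)` be an exact
LCS pair at a point: `D` a `2`-form with `(D − η∧λ)^n ≠ 0` (nondegeneracy of
`d_η λ`), and `Z` with `ι_Z(D − η∧λ) = λ`. Then `η(Z) ≠ 0` if and only if the top
form `η ∧ λ ∧ D^{n−1}` is nonzero. -/
theorem eta_Z_nonzero_iff_top_form_nonzero {V : Type*} [AddCommGroup V] [Module ℝ V]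
    [FiniteDimensional ℝ V] (n : ℕ) (hn : 1 ≤ n) (hdim : Module.finrank ℝ V = 2 * n)
    (lam η : Module.Dual ℝ V) (Z : V)
    (D : ExteriorAlgebra ℝ (Module.Dual ℝ V))
    (hD : D ∈ (LinearMap.range
      (ι ℝ : Module.Dual ℝ V →ₗ[ℝ] ExteriorAlgebra ℝ (Module.Dual ℝ V))) ^ 2)
    (hnd : (D - ι ℝ η * ι ℝ lam) ^ n ≠ 0)
    (hZ : intProd Z (D - ι ℝ η * ι ℝ lam) = ι ℝ lam) :
    η Z ≠ 0 ↔ ι ℝ η * ι ℝ lam * D ^ (n - 1) ≠ 0 := by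
  simp only [intProd] at hZ
  set φ : Module.Dual ℝ (Module.Dual ℝ V) := Module.Dual.eval ℝ V Z with hφdef
  set c := CliffordAlgebra.contractLeft (M := Module.Dual ℝ V) φ with hcdef
  by_cases hZ0 : Z = 0
  · subst hZ0
    have hφ0 : φ = 0 := by
      rw [hφdef]
      exact map_zero (Module.Dual.eval ℝ V)
    have hlam : ι ℝ lam = 0 := by
      rw [← hZ, hcdef, hφ0, map_zero, LinearMap.zero_apply]
    rw [map_zero η, hlam, mul_zero, zero_mul]
    simp
  -- now Z ≠ 0
  obtain ⟨m, rfl⟩ : ∃ m, n = m + 1 := ⟨n - 1, (Nat.succ_pred_eq_of_pos hn).symm⟩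
  have hm1 : m + 1 - 1 = m := by omega
  rw [hm1]
  obtain ⟨w, hw⟩ : ∃ w : Module.Dual ℝ V, w Z ≠ 0 := by
    by_contra h
    push_neg at h
    exact hZ0 ((Module.forall_dual_apply_eq_zero_iff ℝ Z).mp h)
  have hwφ : φ w ≠ 0 := hw
  set b := ι ℝ η * ι ℝ lam with hbdef
  set ω := D - b with hωdef
  set p := (LinearMap.range (ι ℝ : Module.Dual ℝ V →ₗ[ℝ]
      ExteriorAlgebra ℝ (Module.Dual ℝ V))) with hpdef
  have hbp : b ∈ p ^ 2 := by
    rw [pow_two]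
    exact Submodule.mul_mem_mul (LinearMap.mem_range_self _ _) (LinearMap.mem_range_self _ _)
  have hωp : ω ∈ p ^ 2 := Submodule.sub_mem _ hD hbp
  have hfr : Module.finrank ℝ (Module.Dual ℝ V) = 2 * (m + 1) := by
    rw [Subspace.dual_finrank_eq, hdim]
  -- `lam Z = 0`
  have hlamZ : lam Z = 0 := by
    have h0 : c (ι ℝ lam) = 0 := by
      rw [← hZ]
      exact CliffordAlgebra.contractLeft_contractLeft _ _
    rw [CliffordAlgebra.contractLeft_ι] at h0
    have := (algebraMap_inj (M := Module.Dual ℝ V) (φ lam) 0).mp (by simpa using h0)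
    simpa [hφdef, Module.Dual.eval_apply] using this
  have hφlam : φ lam = 0 := hlamZ
  have hφη : φ η = η Z := rfl
  -- contraction of b
  have hcb : c b = η Z • ι ℝ lam := by
    rw [hbdef, hcdef, CliffordAlgebra.contractLeft_ι_mul, CliffordAlgebra.contractLeft_ι,
      hφlam, hφη, map_zero, mul_zero, sub_zero]
  -- contraction of D
  have hcD : c D = (1 + η Z) • ι ℝ lam := by
    have h := hZ
    rw [hωdef, map_sub, hcb, sub_eq_iff_eq_add] at h
    rw [h, add_smul, one_smul]
  have hbl : b * ι ℝ lam = 0 := by rw [hbdef, mul_assoc, ι_sq_zero, mul_zero]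
  have hlb : ι ℝ lam * b = 0 := by
    rw [hbdef, ← mul_assoc, aux_ι_anticomm lam η, neg_mul, mul_assoc, ι_sq_zero,
      mul_zero, neg_zero]
  -- `b * c (D ^ k) = 0`
  have hbck : ∀ k : ℕ, b * c (D ^ k) = 0 := by
    intro k
    induction k with
    | zero => simp [hcdef, CliffordAlgebra.contractLeft_one]
    | succ k ih =>
      rw [pow_succ', hcdef, aux_contract_two φ hD (D ^ k), ← hcdef, mul_add, hcD,
        smul_mul_assoc, mul_smul_comm, ← mul_assoc, hbl, zero_mul, smul_zero,
        ← mul_assoc, ← aux_central hD b, mul_assoc, ih, mul_zero, add_zero]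
  have hlω : ι ℝ lam * ω = ι ℝ lam * D := by rw [hωdef, mul_sub, hlb, sub_zero]
  -- `ι lam * ω ^ k = ι lam * D ^ k`
  have hlam_pow : ∀ k : ℕ, ι ℝ lam * ω ^ k = ι ℝ lam * D ^ k := by
    intro k
    induction k with
    | zero => rw [pow_zero, pow_zero]
    | succ k ih =>
      calc ι ℝ lam * ω ^ (k + 1) = ι ℝ lam * (ω * ω ^ k) := by rw [pow_succ']
        _ = (ι ℝ lam * ω) * ω ^ k := by rw [mul_assoc]
        _ = (ι ℝ lam * D) * ω ^ k := by rw [hlω]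
        _ = (D * ι ℝ lam) * ω ^ k := by rw [aux_central hD (ι ℝ lam)]
        _ = D * (ι ℝ lam * ω ^ k) := by rw [mul_assoc]
        _ = D * (ι ℝ lam * D ^ k) := by rw [ih]
        _ = (D * ι ℝ lam) * D ^ k := by rw [mul_assoc]
        _ = (ι ℝ lam * D) * D ^ k := by rw [aux_central hD (ι ℝ lam)]
        _ = ι ℝ lam * (D * D ^ k) := by rw [mul_assoc]
        _ = ι ℝ lam * D ^ (k + 1) := by rw [← pow_succ']
  have hωl : ω * ι ℝ lam = ι ℝ lam * D := by
    rw [aux_central hωp (ι ℝ lam), hlω]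
  -- contraction of powers of ω
  have hcω : ∀ k : ℕ, c (ω ^ (k + 1)) = ((k : ℝ) + 1) • (ι ℝ lam * D ^ k) := by
    intro k
    induction k with
    | zero => rw [zero_add, pow_one, hZ, pow_zero, mul_one]; norm_num
    | succ k ih =>
      calc c (ω ^ (k + 1 + 1)) = c (ω * ω ^ (k + 1)) := by rw [pow_succ']
        _ = c ω * ω ^ (k + 1) + ω * c (ω ^ (k + 1)) := by
            rw [hcdef, aux_contract_two φ hωp, ← hcdef]
        _ = ι ℝ lam * D ^ (k + 1) + ω * (((k : ℝ) + 1) • (ι ℝ lam * D ^ k)) := by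
            rw [hZ, hlam_pow, ih]
        _ = ι ℝ lam * D ^ (k + 1) + ((k : ℝ) + 1) • (ω * (ι ℝ lam * D ^ k)) := by
            rw [mul_smul_comm]
        _ = ι ℝ lam * D ^ (k + 1) + ((k : ℝ) + 1) • ((ω * ι ℝ lam) * D ^ k) := by
            rw [mul_assoc]
        _ = ι ℝ lam * D ^ (k + 1) + ((k : ℝ) + 1) • ((ι ℝ lam * D) * D ^ k) := by
            rw [hωl]
        _ = ι ℝ lam * D ^ (k + 1) + ((k : ℝ) + 1) • (ι ℝ lam * (D * D ^ k)) := by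
            rw [mul_assoc]
        _ = ι ℝ lam * D ^ (k + 1) + ((k : ℝ) + 1) • (ι ℝ lam * D ^ (k + 1)) := by
            rw [← pow_succ']
        _ = ((((k : ℕ) + 1 : ℕ) : ℝ) + 1) • (ι ℝ lam * D ^ (k + 1)) := by
            push_cast
            module
  -- top-degree memberships
  have hωtop : ω ^ (m + 1) ∈ p ^ Module.finrank ℝ (Module.Dual ℝ V) := by
    rw [hfr, pow_mul]
    exact Submodule.pow_mem_pow _ hωp (m + 1)
  have hTtop : b * D ^ m ∈ p ^ Module.finrank ℝ (Module.Dual ℝ V) := by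
    rw [hfr, pow_mul, pow_succ']
    exact Submodule.mul_mem_mul hbp (Submodule.pow_mem_pow _ hD m)
  -- `ι lam * D ^ m ≠ 0`
  have htop : ι ℝ lam * D ^ m ≠ 0 := by
    intro h
    apply hnd
    apply aux_top_inj φ hwφ hωtop
    rw [← hcdef, hcω m, h, smul_zero]
  -- contraction of the top form
  have hT : c (ι ℝ η * ι ℝ lam * D ^ m) = η Z • (ι ℝ lam * D ^ m) := by
    rw [← hbdef, hcdef, aux_contract_two φ hbp (D ^ m), ← hcdef, hbck m, add_zero,
      hcb, smul_mul_assoc]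
  constructor
  · intro hη hzero
    rw [← hbdef, hzero, map_zero] at hT
    rcases smul_eq_zero.mp hT.symm with h | h
    · exact hη h
    · exact htop h
  · intro hne hη0
    apply hne
    rw [← hbdef] at hT
    rw [hη0, zero_smul] at hT
    exact aux_top_inj φ hwφ hTtop (by rw [← hcdef]; exact hT)
end

section
/- Let (λ, η) be an exact LCS pair on a 2n-manifold M. Define the elasticity E(λ,η) := {c ∈ ℝ : d_{cη}λ := dλ − c η∧λ is nondegenerate}. If λ is nowhere vanishing, then E(λ,η) equals the complement of the image of the function (1 + η(Z))/η(Z) defined on the open set where η(Z) ≠ 0, where Z is the η-Liouville vector field. In general E(λ,η) ⊆ Im((1+η(Z))/η(Z))^c. -/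
open ExteriorAlgebra

set_option maxHeartbeats 2000000
set_option synthInstance.maxHeartbeats 1000000

/-!
Write `ω = dλ - η∧λ` and `E = η∧λ`, so that `dλ - c η∧λ = ω + (1 - c) E`. Since `E² = 0` and
2-forms commute, `(ω + sE)ⁿ = ωⁿ + s n E ωⁿ⁻¹`. The `(2n+1)`-form `η ∧ ωⁿ` vanishes in
dimension `2n`; contracting it with `Z` and using `ι_Z ω = λ` gives `η(Z) ωⁿ = n E ωⁿ⁻¹`. Hence
`(dλ - c η∧λ)ⁿ = (1 + (1 - c) η(Z)) ωⁿ`, and as `ωⁿ ≠ 0` this vanishes exactly where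
`1 + (1 - c) η(Z) = 0`, i.e. where `η(Z) ≠ 0` and `c = (1 + η(Z)) / η(Z)`.
-/

open CliffordAlgebra (contractLeft contractLeft_ι contractLeft_ι_mul)

theorem Commute.add_pow_succ_of_mul_self_eq_zero {A : Type*} [Semiring A] {a b : A}
    (h : Commute a b) (hb : b * b = 0) (k : ℕ) :
    (a + b) ^ (k + 1) = a ^ (k + 1) + (k + 1) • (b * a ^ k) := by
  induction k with
  | zero => simp
  | succ k ih =>
    have hb_absorb : (a + b) * (b * a ^ k) = b * a ^ (k + 1) := by
      rw [add_mul, ← mul_assoc, h.eq, mul_assoc, ← pow_succ', ← mul_assoc, hb, zero_mul, add_zero]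
    rw [pow_succ', ih, mul_add, mul_smul_comm, hb_absorb, add_mul, ← pow_succ', add_assoc,
      ← succ_nsmul']

namespace ExteriorAlgebra

variable {R M : Type*} [CommRing R] [AddCommGroup M] [Module R M]

theorem ι_mul_ι_mem_exteriorPower_two (x y : M) : ι R x * ι R y ∈ ⋀[R]^2 M := by
  rw [exteriorPower, pow_two]
  exact Submodule.mul_mem_mul (LinearMap.mem_range_self _ x) (LinearMap.mem_range_self _ y)

theorem commute_ι_of_mem_exteriorPower_two (m : M) {a : ExteriorAlgebra R M}
    (ha : a ∈ ⋀[R]^2 M) : Commute (ι R m) a := by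
  have anticomm (x y : M) : ι R x * ι R y = -(ι R y * ι R x) :=
    eq_neg_of_add_eq_zero_left (ι_add_mul_swap x y)
  rw [exteriorPower, pow_two] at ha
  refine Submodule.mul_induction_on ha ?_ fun _ _ hx hy => hx.add_right hy
  rintro _ ⟨u, rfl⟩ _ ⟨v, rfl⟩
  show ι R m * (ι R u * ι R v) = ι R u * ι R v * ι R m
  rw [← mul_assoc, anticomm m u, neg_mul, mul_assoc, anticomm m v, mul_neg, neg_neg, mul_assoc]

theorem contractLeft_mul_of_mem_exteriorPower_two (d : Module.Dual R M)
    {a : ExteriorAlgebra R M} (ha : a ∈ ⋀[R]^2 M) (x : ExteriorAlgebra R M) :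
    contractLeft d (a * x) = contractLeft d a * x + a * contractLeft d x := by
  rw [exteriorPower, pow_two] at ha
  refine Submodule.mul_induction_on ha ?_ fun _ _ hx hy => ?_
  · rintro _ ⟨u, rfl⟩ _ ⟨v, rfl⟩
    simp only [mul_assoc, contractLeft_ι_mul, contractLeft_ι, mul_sub, sub_mul, smul_mul_assoc,
      mul_smul_comm, Algebra.algebraMap_eq_smul_one, mul_one]
    abel
  · simp only [add_mul, map_add, hx, hy]
    abel

theorem contractLeft_pow_succ (d : Module.Dual R M) {ω : ExteriorAlgebra R M}
    (hω : ω ∈ ⋀[R]^2 M) {l : M} (hl : contractLeft d ω = ι R l) (k : ℕ) :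
    contractLeft d (ω ^ (k + 1)) = (k + 1) • (ι R l * ω ^ k) := by
  induction k with
  | zero => simp [hl]
  | succ k ih =>
    rw [pow_succ', contractLeft_mul_of_mem_exteriorPower_two d hω, ih, hl, mul_smul_comm,
      ← mul_assoc, ← (commute_ι_of_mem_exteriorPower_two l hω).eq, mul_assoc, ← pow_succ']
    exact (succ_nsmul' _ _).symm

theorem exteriorPower_eq_bot_of_finrank_lt [Nontrivial R] [Module.Free R M] [Module.Finite R M]
    {k : ℕ} (hk : Module.finrank R M < k) : ⋀[R]^k M = ⊥ := by
  have : Subsingleton (⋀[R]^k M) := by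
    rw [← Module.finrank_eq_zero_iff_of_free R, exteriorPower.finrank_eq,
      Nat.choose_eq_zero_of_lt hk]
  exact Submodule.eq_bot_of_subsingleton

theorem pow_add_smul_ι_mul_ι [Nontrivial R] [Module.Free R M] [Module.Finite R M] {n : ℕ}
    (hn : Module.finrank R M ≤ 2 * n) (d : Module.Dual R M) {ω : ExteriorAlgebra R M}
    (hω : ω ∈ ⋀[R]^2 M) {l : M} (hl : contractLeft d ω = ι R l) (η : M) (s : R) :
    (ω + s • (ι R η * ι R l)) ^ n = (1 + s * d η) • ω ^ n := by
  have htop : ι R η * ω ^ n = 0 := by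
    have hmem : ι R η * ω ^ n ∈ ⋀[R]^(1 + 2 * n) M := by
      rw [exteriorPower, pow_add, pow_one, pow_mul]
      exact Submodule.mul_mem_mul (LinearMap.mem_range_self _ η) (Submodule.pow_mem_pow _ hω n)
    simpa [exteriorPower_eq_bot_of_finrank_lt (show Module.finrank R M < 1 + 2 * n by omega)]
      using hmem
  rcases n with _ | m
  · obtain rfl : η = 0 := by simpa using htop
    simp
  set E := ι R η * ι R l
  have hE : E ∈ ⋀[R]^2 M := ι_mul_ι_mem_exteriorPower_two η l
  have hEE : s • E * s • E = 0 := by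
    rw [smul_mul_smul_comm, mul_assoc, (commute_ι_of_mem_exteriorPower_two l hE).eq, mul_assoc,
      ι_sq_zero, mul_zero, mul_zero, smul_zero]
  have hωE : Commute ω E := ((commute_ι_of_mem_exteriorPower_two η hω).mul_left
    (commute_ι_of_mem_exteriorPower_two l hω)).symm
  have hdη : d η • ω ^ (m + 1) = (m + 1) • (E * ω ^ m) := by
    have := congrArg (contractLeft d) htop
    rwa [contractLeft_ι_mul, contractLeft_pow_succ d hω hl, map_zero, mul_smul_comm,
      ← mul_assoc, sub_eq_zero] at this
  rw [(hωE.smul_right s).add_pow_succ_of_mul_self_eq_zero hEE, smul_mul_assoc, smul_comm, ← hdη,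
    smul_smul, add_smul, one_smul]

end ExteriorAlgebra

theorem one_add_one_sub_mul_eq_zero_iff {K : Type*} [Field K] (t c : K) :
    1 + (1 - c) * t = 0 ↔ t ≠ 0 ∧ (1 + t) / t = c := by
  constructor
  · intro h
    have ht : t ≠ 0 := by rintro rfl; simp at h
    refine ⟨ht, ?_⟩
    rw [div_eq_iff ht]
    linear_combination h
  · rintro ⟨ht, rfl⟩
    field_simp
    ring

theorem elasticity_subset_complement_of_image_general {M : Type*} (n : ℕ)
    (V : M → Type*) [∀ x, AddCommGroup (V x)] [∀ x, Module ℝ (V x)]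
    [∀ x, FiniteDimensional ℝ (V x)] (hdim : ∀ x, Module.finrank ℝ (V x) = 2 * n)
    (lam η : ∀ x, Module.Dual ℝ (V x))
    (D : ∀ x, ExteriorAlgebra ℝ (Module.Dual ℝ (V x))) (Z : ∀ x, V x)
    (hD : ∀ x, D x ∈ (LinearMap.range
      (ι ℝ : Module.Dual ℝ (V x) →ₗ[ℝ] ExteriorAlgebra ℝ (Module.Dual ℝ (V x)))) ^ 2)
    (hnd : ∀ x, (D x - ι ℝ (η x) * ι ℝ (lam x)) ^ n ≠ 0)
    (hZ : ∀ x, intProd (Z x) (D x - ι ℝ (η x) * ι ℝ (lam x)) = ι ℝ (lam x)) :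
    {c : ℝ | ∀ x, (D x - c • (ι ℝ (η x) * ι ℝ (lam x))) ^ n ≠ 0}
        ⊆ ((fun x => (1 + η x (Z x)) / η x (Z x)) '' {x | η x (Z x) ≠ 0})ᶜ ∧
    ((∀ x, lam x ≠ 0) →
      {c : ℝ | ∀ x, (D x - c • (ι ℝ (η x) * ι ℝ (lam x))) ^ n ≠ 0}
        = ((fun x => (1 + η x (Z x)) / η x (Z x)) '' {x | η x (Z x) ≠ 0})ᶜ) := by
  have hpow (x : M) (c : ℝ) : (D x - c • (ι ℝ (η x) * ι ℝ (lam x))) ^ n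
      = (1 + (1 - c) * η x (Z x)) • (D x - ι ℝ (η x) * ι ℝ (lam x)) ^ n := by
    have hω := Submodule.sub_mem _ (hD x) (ι_mul_ι_mem_exteriorPower_two (η x) (lam x))
    rw [show D x - c • (ι ℝ (η x) * ι ℝ (lam x)) = D x - ι ℝ (η x) * ι ℝ (lam x)
      + (1 - c) • (ι ℝ (η x) * ι ℝ (lam x)) by module]
    exact pow_add_smul_ι_mul_ι (Subspace.dual_finrank_eq.trans (hdim x)).le _ hω (hZ x) _ _
  have hEq : {c : ℝ | ∀ x, (D x - c • (ι ℝ (η x) * ι ℝ (lam x))) ^ n ≠ 0}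
      = ((fun x => (1 + η x (Z x)) / η x (Z x)) '' {x | η x (Z x) ≠ 0})ᶜ := by
    ext c
    simp only [Set.mem_ofPred_eq, Set.mem_compl_iff, Set.mem_image, not_exists]
    refine forall_congr' fun x => ?_
    rw [hpow, smul_ne_zero_iff_left (hnd x), ne_eq, one_add_one_sub_mul_eq_zero_iff]
  exact ⟨hEq.subset, fun _ => hEq⟩

/-- An exact LCS pair on a `2n`-manifold `M`, modeled as a family of
pointwise data: at each point `x`, `1`-forms `lam x, η x` on the tangent space `V x`,
a `2`-form `D x` (representing `dλ` at `x`) with `(D x − η∧λ)^n ≠ 0`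
(nondegeneracy of `d_η λ`), and the `η`-Liouville vector field `Z` with
`ι_{Z x}(D x − η∧λ) = λ`.  The elasticity
`E(λ,η) = {c | dλ − c·η∧λ is everywhere nondegenerate}` satisfies
`E(λ,η) ⊆ Im((1 + η(Z))/η(Z))ᶜ` (image over the set where `η(Z) ≠ 0`), with equality
when `λ` is nowhere vanishing. -/
theorem elasticity_subset_complement_of_image {M : Type*} (n : ℕ) (hn : 1 ≤ n)
    (V : M → Type*) [∀ x, AddCommGroup (V x)] [∀ x, Module ℝ (V x)]
    [∀ x, FiniteDimensional ℝ (V x)] (hdim : ∀ x, Module.finrank ℝ (V x) = 2 * n)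
    (lam η : ∀ x, Module.Dual ℝ (V x))
    (D : ∀ x, ExteriorAlgebra ℝ (Module.Dual ℝ (V x))) (Z : ∀ x, V x)
    (hD : ∀ x, D x ∈ (LinearMap.range
      (ι ℝ : Module.Dual ℝ (V x) →ₗ[ℝ] ExteriorAlgebra ℝ (Module.Dual ℝ (V x)))) ^ 2)
    (hnd : ∀ x, (D x - ι ℝ (η x) * ι ℝ (lam x)) ^ n ≠ 0)
    (hZ : ∀ x, intProd (Z x) (D x - ι ℝ (η x) * ι ℝ (lam x)) = ι ℝ (lam x)) :
    {c : ℝ | ∀ x, (D x - c • (ι ℝ (η x) * ι ℝ (lam x))) ^ n ≠ 0}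
        ⊆ ((fun x => (1 + η x (Z x)) / η x (Z x)) '' {x | η x (Z x) ≠ 0})ᶜ ∧
    ((∀ x, lam x ≠ 0) →
      {c : ℝ | ∀ x, (D x - c • (ι ℝ (η x) * ι ℝ (lam x))) ^ n ≠ 0}
        = ((fun x => (1 + η x (Z x)) / η x (Z x)) '' {x | η x (Z x) ≠ 0})ᶜ) :=
  elasticity_subset_complement_of_image_general n V hdim lam η D Z hD hnd hZ
end
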